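/- Let F be a cellular automaton on A^ℤ with radius r > 0. The following conditions are equivalent: (1) F is not sensitive to initial conditions; (2) F has an r-blocking word; (3) F has an equicontinuous point. -/
import Mathlib


open MeasureTheory Function Set
open scoped Classical ENNReal

/-- The configuration space of a one-dimensional cellular automaton over the alphabet `A`. -/
abbrev Config (A : Type*) := ℤ → A

/-- The shift map `σ`, defined by `σ(x)_i = x_{i+1}`. -/
def shift {A : Type*} (x : Config A) : Config A := fun i => x (i + 1)

/-- The standard metric `d(x,y) = 2^{-n}` where
`n = min { i ≥ 0 : x_i ≠ y_i or x_{-i} ≠ y_{-i} }`, inducing the product topology. -/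
noncomputable def cdist {A : Type*} (x y : Config A) : ℝ :=
  if x = y then 0
  else (2 : ℝ) ^ (-((sInf {n : ℕ | x (n : ℤ) ≠ y (n : ℤ) ∨ x (-(n : ℤ)) ≠ y (-(n : ℤ))} : ℕ) : ℤ))

/-- `F` has radius `r`: there is a local rule `f : A^{2r+1} → A` with
`F(x)_i = f(x_{i-r}, ..., x_{i+r})`. -/
def HasRadius {A : Type*} (F : Config A → Config A) (r : ℕ) : Prop :=
  ∃ f : (Fin (2 * r + 1) → A) → A, ∀ (x : Config A) (i : ℤ),
    F x i = f (fun j => x (i - (r : ℤ) + (j : ℤ)))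

/-- A map on `A^ℤ` is equicontinuous if the family of its iterates is uniformly
equicontinuous. -/
def EquicontMap {A : Type*} (F : Config A → Config A) : Prop :=
  ∀ ε > (0 : ℝ), ∃ δ > (0 : ℝ), ∀ x y : Config A, cdist x y < δ →
    ∀ n : ℕ, cdist (F^[n] x) (F^[n] y) < ε

/-- `x` is an equicontinuous point of `F`. -/
def IsEquicontPt {A : Type*} (F : Config A → Config A) (x : Config A) : Prop :=
  ∀ ε > (0 : ℝ), ∃ δ > (0 : ℝ), ∀ y : Config A, cdist x y < δ →
    ∀ n : ℕ, cdist (F^[n] x) (F^[n] y) < ε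

/-- `F` is sensitive to initial conditions. -/
def Sensitive {A : Type*} (F : Config A → Config A) : Prop :=
  ∃ ε > (0 : ℝ), ∀ x : Config A, ∀ δ > (0 : ℝ), ∃ y : Config A,
    cdist x y < δ ∧ ∃ n : ℕ, ε ≤ cdist (F^[n] x) (F^[n] y)

/-- `w : A^L` is an `s`-blocking word for `F`. -/
def IsBlockingWord {A : Type*} (F : Config A → Config A) (s L : ℕ) (w : Fin L → A) : Prop :=
  s ≤ L ∧ ∃ p : ℕ, p + s ≤ L ∧ ∀ x y : Config A,
    (∀ j : Fin L, x (j : ℤ) = w j) → (∀ j : Fin L, y (j : ℤ) = w j) →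
    ∀ n : ℕ, ∀ k : ℤ, (p : ℤ) ≤ k → k ≤ (p : ℤ) + (s : ℤ) →
      F^[n] x k = F^[n] y k

/-- The cylinder `[x(-n,n)]` of configurations agreeing with `x` on coordinates `-n, ..., n`. -/
def cyl {A : Type*} (x : Config A) (n : ℕ) : Set (Config A) :=
  {y | ∀ j : ℤ, -(n : ℤ) ≤ j → j ≤ (n : ℤ) → y j = x j}

/-- The set `B_{[i₁,i₂]}(x) = {y : ∀ j ≥ 0, F^j(y)(i₁,i₂) = F^j(x)(i₁,i₂)}`. -/
def Bset {A : Type*} (F : Config A → Config A) (i₁ i₂ : ℤ) (x : Config A) : Set (Config A) :=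
  {y | ∀ k : ℕ, ∀ j : ℤ, i₁ ≤ j → j ≤ i₂ → F^[k] y j = F^[k] x j}

/-- `ν` is the uniform Bernoulli measure: every cylinder determined by coordinates in a
finite set `s` has measure `(1/|A|)^{|s|}`. -/
def IsUniformBernoulli {A : Type*} [Fintype A] [MeasurableSpace A]
    (ν : Measure (Config A)) : Prop :=
  ∀ (s : Finset ℤ) (u : ℤ → A),
    ν {x : Config A | ∀ i ∈ s, x i = u i} = ((Fintype.card A : ℝ≥0∞))⁻¹ ^ s.card

/-- `x` is a `ν`-equicontinuous point of `F` (Gilman). -/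
def NuEquicontPt {A : Type*} [MeasurableSpace A] (F : Config A → Config A)
    (ν : Measure (Config A)) (x : Config A) : Prop :=
  ∀ m : ℕ, 0 < m → Filter.Tendsto
    (fun n : ℕ => ν (cyl x n ∩ Bset F (-(m : ℤ)) (m : ℤ) x) / ν (cyl x n))
    Filter.atTop (nhds 1)

section AuxCA

variable {A : Type*}

/-- Translation by `t`. -/
def trCA (t : ℤ) (x : Config A) : Config A := fun i => x (i + t)

lemma trCA_iterate {F : Config A → Config A} {r : ℕ} (hr : HasRadius F r)
    (t : ℤ) (x : Config A) (n : ℕ) : F^[n] (trCA t x) = trCA t (F^[n] x) := by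
  obtain ⟨f, hf⟩ := hr
  induction n with
  | zero => rfl
  | succ n ih =>
    rw [Function.iterate_succ_apply', Function.iterate_succ_apply', ih]
    funext j
    simp only [trCA]
    rw [hf, hf]
    congr 1
    funext k
    show F^[n] x (j - (r : ℤ) + (k : ℤ) + t) = F^[n] x (j + t - (r : ℤ) + (k : ℤ))
    ring_nf

lemma cdist_lt_of_agree {x y : Config A} {m : ℕ}
    (h : ∀ j : ℤ, -(m : ℤ) ≤ j → j ≤ (m : ℤ) → x j = y j) :
    cdist x y < (2 : ℝ) ^ (-(m : ℤ)) := by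
  unfold cdist
  split
  · positivity
  · rename_i hxy
    have hkey : ∀ n ∈ {n : ℕ | x (n : ℤ) ≠ y (n : ℤ) ∨ x (-(n : ℤ)) ≠ y (-(n : ℤ))}, m < n := by
      intro n hn
      by_contra hle
      push_neg at hle
      rcases hn with hn | hn
      · exact hn (h n (by omega) (by exact_mod_cast hle))
      · exact hn (h (-(n : ℤ)) (by omega) (by omega))
    have hne : {n : ℕ | x (n : ℤ) ≠ y (n : ℤ) ∨ x (-(n : ℤ)) ≠ y (-(n : ℤ))}.Nonempty := by
      by_contra hemp
      apply hxy
      funext i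
      rw [Set.not_nonempty_iff_eq_empty] at hemp
      have hi : i.natAbs ∉ (∅ : Set ℕ) := Set.notMem_empty _
      rw [← hemp] at hi
      simp only [Set.mem_setOf_eq, not_or, not_not] at hi
      rcases Int.natAbs_eq i with h' | h'
      · rw [h']; exact hi.1
      · rw [h']; exact hi.2
    have hlt := hkey _ (Nat.sInf_mem hne)
    exact zpow_lt_zpow_right₀ one_lt_two (by omega)

lemma agree_of_cdist_lt {x y : Config A} {m : ℕ}
    (h : cdist x y < (2 : ℝ) ^ (-(m : ℤ))) :
    ∀ j : ℤ, -(m : ℤ) ≤ j → j ≤ (m : ℤ) → x j = y j := by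
  unfold cdist at h
  split at h
  · rename_i hxy; subst hxy; intro j _ _; rfl
  · intro j h1 h2
    by_contra hne
    have hmem : j.natAbs ∈ {n : ℕ | x (n : ℤ) ≠ y (n : ℤ) ∨ x (-(n : ℤ)) ≠ y (-(n : ℤ))} := by
      rcases Int.natAbs_eq j with h' | h'
      · left; rw [← h']; exact hne
      · right; rw [show -((j.natAbs : ℕ) : ℤ) = j by omega]; exact hne
    have hle := Nat.sInf_le hmem
    have : (2 : ℝ) ^ (-(m : ℤ)) ≤ (2 : ℝ) ^
        (-((sInf {n : ℕ | x (n : ℤ) ≠ y (n : ℤ) ∨ x (-(n : ℤ)) ≠ y (-(n : ℤ))} : ℕ) : ℤ)) :=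
      zpow_le_zpow_right₀ one_le_two (by omega)
    linarith

lemma exists_neg_zpow_lt {δ : ℝ} (hδ : 0 < δ) : ∃ N : ℕ, (2 : ℝ) ^ (-(N : ℤ)) < δ := by
  obtain ⟨n, hn⟩ := exists_pow_lt_of_lt_one hδ (by norm_num : (1 / 2 : ℝ) < 1)
  refine ⟨n, ?_⟩
  rw [zpow_neg, zpow_natCast]
  simpa [one_div, inv_pow] using hn

lemma neg_zpow_mono {a b : ℕ} (h : a ≤ b) :
    (2 : ℝ) ^ (-(b : ℤ)) ≤ (2 : ℝ) ^ (-(a : ℤ)) :=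
  zpow_le_zpow_right₀ one_le_two (by omega)

/-- Crossing lemma: two blocked columns confine differences between them. -/
lemma crossingCA {F : Config A → Config A} {r : ℕ} (hr : HasRadius F r)
    {a b : ℤ} {x y : Config A}
    (hL : ∀ n : ℕ, ∀ k : ℤ, a ≤ k → k ≤ a + r → F^[n] x k = F^[n] y k)
    (hR : ∀ n : ℕ, ∀ k : ℤ, b ≤ k → k ≤ b + r → F^[n] x k = F^[n] y k)
    (h0 : ∀ k : ℤ, a ≤ k → k ≤ b + r → x k = y k) :
    ∀ n : ℕ, ∀ k : ℤ, a ≤ k → k ≤ b + r → F^[n] x k = F^[n] y k := by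
  obtain ⟨f, hf⟩ := hr
  intro n
  induction n with
  | zero => exact h0
  | succ n ih =>
    intro k hk1 hk2
    rcases le_or_gt k (a + r) with hc | hc
    · exact hL (n + 1) k hk1 hc
    rcases le_or_gt b k with hc' | hc'
    · exact hR (n + 1) k hc' hk2
    rw [Function.iterate_succ_apply', Function.iterate_succ_apply', hf, hf]
    congr 1
    funext j
    have hj : (j : ℤ) ≤ 2 * r := by exact_mod_cast Nat.lt_succ_iff.mp j.isLt
    exact ih (k - (r : ℤ) + (j : ℤ)) (by omega) (by omega)

/-- Blocking works at translated positions too. -/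
lemma blockAt {F : Config A → Config A} {r L : ℕ} {w : Fin L → A} (hr : HasRadius F r) {p : ℕ}
    (hb : ∀ x y : Config A, (∀ j : Fin L, x (j : ℤ) = w j) → (∀ j : Fin L, y (j : ℤ) = w j) →
      ∀ n : ℕ, ∀ k : ℤ, (p : ℤ) ≤ k → k ≤ (p : ℤ) + (r : ℤ) → F^[n] x k = F^[n] y k)
    (t : ℤ) (u v : Config A)
    (hu : ∀ j : Fin L, u (t + (j : ℤ)) = w j) (hv : ∀ j : Fin L, v (t + (j : ℤ)) = w j) :
    ∀ n : ℕ, ∀ k : ℤ, t + p ≤ k → k ≤ t + p + r → F^[n] u k = F^[n] v k := by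
  intro n k h1 h2
  have key := hb (trCA t u) (trCA t v)
    (fun j => by show u ((j : ℤ) + t) = w j; rw [add_comm]; exact hu j)
    (fun j => by show v ((j : ℤ) + t) = w j; rw [add_comm]; exact hv j)
    n (k - t) (by omega) (by omega)
  rw [trCA_iterate hr, trCA_iterate hr] at key
  have hkt : k - t + t = k := by ring
  simpa [trCA, hkt] using key

/-- The periodic configuration repeating `w`. -/
def perConf (L : ℕ) (hL : 0 < L) (w : Fin L → A) : Config A :=
  fun i => w ⟨(i % (L : ℤ)).toNat, by
    have h1 : 0 ≤ i % (L : ℤ) := Int.emod_nonneg _ (by exact_mod_cast hL.ne')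
    have h2 : i % (L : ℤ) < L := Int.emod_lt_of_pos _ (by exact_mod_cast hL)
    omega⟩

lemma perConf_occ (L : ℕ) (hL : 0 < L) (w : Fin L → A) (c : ℤ) (j : Fin L) :
    perConf L hL w ((L : ℤ) * c + (j : ℤ)) = w j := by
  unfold perConf
  congr 1
  apply Fin.ext
  show (((L : ℤ) * c + (j : ℤ)) % L).toNat = (j : ℕ)
  have hj : ((L : ℤ) * c + (j : ℤ)) % (L : ℤ) = (j : ℤ) := by
    rw [add_comm, Int.add_mul_emod_self_left]
    exact Int.emod_eq_of_lt (by positivity) (by exact_mod_cast j.isLt)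
  omega

lemma blocking_of_not_sensitive {F : Config A → Config A} {r : ℕ}
    (hr : HasRadius F r) (hns : ¬ Sensitive F) :
    ∃ (L : ℕ) (w : Fin L → A), IsBlockingWord F r L w := by
  unfold Sensitive at hns
  push_neg at hns
  obtain ⟨x, δ, hδ0, hx⟩ := hns ((2 : ℝ) ^ (-(r : ℤ))) (by positivity)
  obtain ⟨N₀, hN₀⟩ := exists_neg_zpow_lt hδ0
  set N : ℕ := max N₀ r with hN
  have hrN : r ≤ N := le_max_right _ _
  have hNδ : (2 : ℝ) ^ (-(N : ℤ)) < δ := lt_of_le_of_lt (neg_zpow_mono (le_max_left _ _)) hN₀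
  refine ⟨2 * N + 1, fun j => x ((j : ℤ) - N), by omega, N - r, by omega, ?_⟩
  have key : ∀ z : Config A, (∀ j : Fin (2 * N + 1), z (j : ℤ) = x ((j : ℤ) - N)) →
      ∀ n : ℕ, ∀ i : ℤ, -(r : ℤ) ≤ i → i ≤ (r : ℤ) → F^[n] z (i + N) = F^[n] x i := by
    intro z hz n i hi1 hi2
    have hzx : ∀ i : ℤ, -(N : ℤ) ≤ i → i ≤ (N : ℤ) → x i = trCA (N : ℤ) z i := by
      intro i h1 h2
      have hlt : (i + (N : ℤ)).toNat < 2 * N + 1 := by omega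
      have := hz ⟨(i + (N : ℤ)).toNat, hlt⟩
      simp only at this
      rw [show ((((i + (N : ℤ)).toNat : ℕ)) : ℤ) = i + N by omega] at this
      show x i = z (i + N)
      rw [this]
      congr 1
      ring
    have hcd : cdist x (trCA (N : ℤ) z) < δ :=
      lt_of_lt_of_le (cdist_lt_of_agree hzx) hNδ.le
    have hn := hx (trCA (N : ℤ) z) hcd n
    have := agree_of_cdist_lt hn i hi1 hi2
    rw [trCA_iterate hr] at this
    exact (by simpa [trCA] using this.symm)
  intro u v hu hv n k hk1 hk2
  have hk1' : ((N : ℤ) - r) ≤ k := by omega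
  have hk2' : k ≤ (N : ℤ) := by omega
  have hu' := key u hu n (k - N) (by omega) (by omega)
  have hv' := key v hv n (k - N) (by omega) (by omega)
  have hkn : k - (N : ℤ) + N = k := by ring
  rw [hkn] at hu' hv'
  rw [hu', hv']

lemma equicont_of_blocking {F : Config A → Config A} {r : ℕ} (hr0 : 0 < r)
    (hr : HasRadius F r) (hb : ∃ (L : ℕ) (w : Fin L → A), IsBlockingWord F r L w) :
    ∃ x : Config A, IsEquicontPt F x := by
  obtain ⟨L, w, hrL, p, hpL, hblock⟩ := hb
  have hL0 : 0 < L := lt_of_lt_of_le hr0 hrL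
  refine ⟨perConf L hL0 w, ?_⟩
  intro ε hε
  obtain ⟨m, hm⟩ := exists_neg_zpow_lt hε
  set x := perConf L hL0 w with hxdef
  set N : ℕ := L * (m + p) + L * m + L with hNdef
  have hP : m + p ≤ L * (m + p) := Nat.le_mul_of_pos_left _ hL0
  have hQ : m ≤ L * m := Nat.le_mul_of_pos_left _ hL0
  refine ⟨(2 : ℝ) ^ (-(N : ℤ)), by positivity, ?_⟩
  intro y hy n
  have hagree := agree_of_cdist_lt hy
  set t₁ : ℤ := -((L * (m + p) : ℕ) : ℤ) with ht₁
  set t₂ : ℤ := ((L * m : ℕ) : ℤ) with ht₂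
  have hxocc1 : ∀ j : Fin L, x (t₁ + (j : ℤ)) = w j := by
    intro j
    have : t₁ + (j : ℤ) = (L : ℤ) * (-((m : ℤ) + (p : ℤ))) + (j : ℤ) := by
      rw [ht₁]; push_cast; ring
    rw [this]; exact perConf_occ L hL0 w _ j
  have hxocc2 : ∀ j : Fin L, x (t₂ + (j : ℤ)) = w j := by
    intro j
    have : t₂ + (j : ℤ) = (L : ℤ) * ((m : ℤ)) + (j : ℤ) := by
      rw [ht₂]; push_cast; ring
    rw [this]; exact perConf_occ L hL0 w _ j
  have hyocc1 : ∀ j : Fin L, y (t₁ + (j : ℤ)) = w j := by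
    intro j
    have hjL : (j : ℤ) < L := by exact_mod_cast j.isLt
    rw [← hagree (t₁ + (j : ℤ)) (by omega) (by omega)]
    exact hxocc1 j
  have hyocc2 : ∀ j : Fin L, y (t₂ + (j : ℤ)) = w j := by
    intro j
    have hjL : (j : ℤ) < L := by exact_mod_cast j.isLt
    rw [← hagree (t₂ + (j : ℤ)) (by omega) (by omega)]
    exact hxocc2 j
  have hcol1 := blockAt hr hblock t₁ x y hxocc1 hyocc1
  have hcol2 := blockAt hr hblock t₂ x y hxocc2 hyocc2
  have hcross := crossingCA hr (a := t₁ + p) (b := t₂ + p) hcol1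
    (by intro n k h1 h2; exact hcol2 n k (by omega) (by omega))
    (by intro k h1 h2; exact hagree k (by omega) (by omega))
  have hfin : ∀ j : ℤ, -(m : ℤ) ≤ j → j ≤ (m : ℤ) → F^[n] x j = F^[n] y j := by
    intro j h1 h2
    exact hcross n j (by omega) (by omega)
  exact lt_trans (cdist_lt_of_agree hfin) hm

lemma not_sensitive_of_equicont_pt {F : Config A → Config A}
    (he : ∃ x : Config A, IsEquicontPt F x) : ¬ Sensitive F := by
  obtain ⟨x, hx⟩ := he
  rintro ⟨ε, hε, hsen⟩
  obtain ⟨δ, hδ, hst⟩ := hx ε hε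
  obtain ⟨y, hy1, n, hy2⟩ := hsen x δ hδ
  exact absurd (hst y hy1 n) (not_lt.mpr hy2)

end AuxCA

/-- For a cellular automaton `F` of radius `r > 0`, the following are
equivalent: (1) `F` is not sensitive; (2) `F` has an `r`-blocking word; (3) `F` has an
equicontinuous point. -/
theorem not_sensitive_iff_blocking_iff_equicontinuous_point
    {A : Type*} [Fintype A] [Nonempty A]
    (F : Config A → Config A) (r : ℕ) (hr0 : 0 < r) (hr : HasRadius F r) :
    (¬ Sensitive F ↔ ∃ (L : ℕ) (w : Fin L → A), IsBlockingWord F r L w) ∧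
    ((∃ (L : ℕ) (w : Fin L → A), IsBlockingWord F r L w) ↔
      ∃ x : Config A, IsEquicontPt F x) := by
  refine ⟨⟨fun hns => blocking_of_not_sensitive hr hns,
    fun hb => not_sensitive_of_equicont_pt (equicont_of_blocking hr0 hr hb)⟩,
    ⟨fun hb => equicont_of_blocking hr0 hr hb,
    fun he => blocking_of_not_sensitive hr (not_sensitive_of_equicont_pt he)⟩⟩
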